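/- A T-gain graph Φ = (G, φ) on a connected graph G is distance compatible if and only if every block of Φ (with the restricted gain function) is distance compatible. -/

import Mathlib

/-
Any path between two vertices of a block stays in the block: otherwise a subpath would be an
ear, and adding it would give a larger biconnected set. Hence distances inside a block are those
of `G`, which gives the forward direction. Conversely, a shortest `s`-`t` path whose first edge
lies in the block `B` stays in `B` up to an exit vertex `c`, and every shortest `s`-`t` path
leaves `B` through the same `c`. The parts before `c` are compared using compatibility of `B`,
the parts after `c` by induction on the distance.
-/

open Matrix
open scoped Classical

noncomputable section

namespace GG

variable {V : Type*}

/-- The gain of a walk: product of the gains of its oriented edges. -/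
def walkGain {G : SimpleGraph V} (φ : V → V → ℂ) {u v : V} (p : G.Walk u v) : ℂ :=
  (p.darts.map (fun d => φ d.toProd.1 d.toProd.2)).prod

/-- `φ` is a `𝕋`-gain function on `G`: unit modulus on edges, inverse under reversal. -/
def IsGain (G : SimpleGraph V) (φ : V → V → ℂ) : Prop :=
  (∀ i j, G.Adj i j → ‖φ i j‖ = 1) ∧ (∀ i j, G.Adj i j → φ j i = (φ i j)⁻¹)

/-- Adjacency matrix of a gain graph. -/
def gainAdj [Fintype V] [DecidableEq V] (G : SimpleGraph V) (φ : V → V → ℂ) :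
    Matrix V V ℂ := fun i j => if G.Adj i j then φ i j else 0

/-- A gain graph is balanced if every cycle has gain 1. -/
def GBalanced (G : SimpleGraph V) (φ : V → V → ℂ) : Prop :=
  ∀ (u : V) (c : G.Walk u u), c.IsCycle → walkGain φ c = 1

/-- All shortest paths between any pair of vertices have the same gain. -/
def DistCompatible (G : SimpleGraph V) (φ : V → V → ℂ) : Prop :=
  ∀ (s t : V) (p q : G.Walk s t), p.length = G.dist s t → q.length = G.dist s t →
    walkGain φ p = walkGain φ q

/-- The set of gains of shortest `s`-`t` paths. -/
def shortestGains (G : SimpleGraph V) (φ : V → V → ℂ) (s t : V) : Set ℂ :=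
  {z | ∃ p : G.Walk s t, p.length = G.dist s t ∧ walkGain φ p = z}

/-- The element of `S` maximizing the real part, ties broken by maximal imaginary part
(correct for finite nonempty sets of gains). -/
def lexMaxGain (S : Set ℂ) : ℂ :=
  ⟨sSup (Complex.re '' S), sSup (Complex.im '' {z ∈ S | z.re = sSup (Complex.re '' S)})⟩

/-- The element of `S` minimizing the real part, ties broken by minimal imaginary part. -/
def lexMinGain (S : Set ℂ) : ℂ :=
  ⟨sInf (Complex.re '' S), sInf (Complex.im '' {z ∈ S | z.re = sInf (Complex.re '' S)})⟩

/-- The maximum gain distance matrix `D^max_<(Φ)` with respect to a strict order `lt`. -/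
def Dmax [Fintype V] [DecidableEq V] (G : SimpleGraph V) (φ : V → V → ℂ)
    (lt : V → V → Prop) : Matrix V V ℂ := fun s t =>
  if lt s t then lexMaxGain (shortestGains G φ s t) * (G.dist s t : ℂ)
  else if lt t s then (starRingEnd ℂ) (lexMaxGain (shortestGains G φ t s)) * (G.dist s t : ℂ)
  else 0

/-- The minimum gain distance matrix `D^min_<(Φ)` with respect to a strict order `lt`. -/
def Dmin [Fintype V] [DecidableEq V] (G : SimpleGraph V) (φ : V → V → ℂ)
    (lt : V → V → Prop) : Matrix V V ℂ := fun s t =>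
  if lt s t then lexMinGain (shortestGains G φ s t) * (G.dist s t : ℂ)
  else if lt t s then (starRingEnd ℂ) (lexMinGain (shortestGains G φ t s)) * (G.dist s t : ℂ)
  else 0

/-- Vertex order independence: the gain distance matrices agree for the standard order
and its reverse. -/
def OrderIndependent [Fintype V] [DecidableEq V] [LinearOrder V] (G : SimpleGraph V)
    (φ : V → V → ℂ) : Prop :=
  Dmax G φ (· < ·) = Dmax G φ (fun a b => b < a) ∧
  Dmin G φ (· < ·) = Dmin G φ (fun a b => b < a)

/-- The largest (real) eigenvalue of a matrix. -/
def maxEig [Fintype V] [DecidableEq V] (A : Matrix V V ℂ) : ℝ :=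
  sSup {r : ℝ | (r : ℂ) ∈ spectrum ℂ A}

/-- The spectral radius of a matrix. -/
def specRad [Fintype V] [DecidableEq V] (A : Matrix V V ℂ) : ℝ :=
  sSup {r : ℝ | ∃ z ∈ spectrum ℂ A, ‖z‖ = r}

/-- The distance matrix of the underlying graph, as a complex matrix. -/
def distMatrix [Fintype V] [DecidableEq V] (G : SimpleGraph V) : Matrix V V ℂ :=
  fun i j => (G.dist i j : ℂ)

/-- Weighted gain adjacency matrix `A(Φ_w)`. -/
def wGainAdj [Fintype V] [DecidableEq V] (G : SimpleGraph V) (φ : V → V → ℂ)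
    (w : V → V → ℝ) : Matrix V V ℂ := fun i j => if G.Adj i j then φ i j * (w i j : ℂ) else 0

/-- Weighted adjacency matrix `A(G_w)` of the underlying weighted graph. -/
def wAdj [Fintype V] [DecidableEq V] (G : SimpleGraph V) (w : V → V → ℝ) :
    Matrix V V ℂ := fun i j => if G.Adj i j then (w i j : ℂ) else 0


/-- `B` induces a connected subgraph with no cut vertex. -/
def IsBiconnectedSet {V : Type*} (G : SimpleGraph V) (B : Set V) : Prop :=
  (G.induce B).Connected ∧
    ∀ v ∈ B, (B \ {v}).Nonempty → (G.induce (B \ {v})).Connected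

/-- `B` is a block of `G`: a maximal set inducing a connected subgraph with no cut vertex. -/
def IsBlock {V : Type*} (G : SimpleGraph V) (B : Set V) : Prop :=
  IsBiconnectedSet G B ∧ ∀ B' : Set V, B ⊆ B' → IsBiconnectedSet G B' → B' = B


open SimpleGraph

variable {G : SimpleGraph V}

section Gain

variable {φ : V → V → ℂ}

lemma walkGain_append {u v w : V} (p : G.Walk u v) (q : G.Walk v w) :
    walkGain φ (p.append q) = walkGain φ p * walkGain φ q := by
  simp [walkGain, Walk.darts_append]

lemma walkGain_map {W : Type*} {H : SimpleGraph W} (f : H →g G) {u v : W} (p : H.Walk u v) :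
    walkGain φ (p.map f) = walkGain (fun a b => φ (f a) (f b)) p := by
  simp [walkGain, Walk.darts_map, Function.comp_def]

lemma walkGain_induce {S : Set V} {u v : V} (p : G.Walk u v) (hp : ∀ x ∈ p.support, x ∈ S) :
    walkGain (fun i j : S => φ i j) (p.induce S hp) = walkGain φ p := by
  have h := walkGain_map (φ := φ) (Embedding.induce S).toHom (p.induce S hp)
  rw [Walk.map_induce] at h
  exact h.symm

end Gain

lemma length_induce {S : Set V} {u v : V} (p : G.Walk u v) (hp : ∀ x ∈ p.support, x ∈ S) :
    (p.induce S hp).length = p.length := by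
  have h := Walk.length_map (Embedding.induce S).toHom (p.induce S hp)
  rw [Walk.map_induce] at h
  exact h.symm

lemma connected_induce_of_forall_exists {S : Set V} {z : V} (hz : z ∈ S)
    (h : ∀ u ∈ S, ∃ T ⊆ S, u ∈ T ∧ z ∈ T ∧ (G.induce T).Preconnected) :
    (G.induce S).Connected := by
  have reach : ∀ u : S, (G.induce S).Reachable u ⟨z, hz⟩ := fun u => by
    obtain ⟨T, hTS, huT, hzT, hT⟩ := h u u.2
    exact (hT ⟨u, huT⟩ ⟨z, hzT⟩).map (G.induceHomOfLE hTS).toHom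
  have : Nonempty S := ⟨⟨z, hz⟩⟩
  exact ⟨fun u v => (reach u).trans (reach v).symm⟩

lemma isBiconnectedSet_pair {u v : V} (h : G.Adj u v) : IsBiconnectedSet G {u, v} := by
  refine ⟨induce_pair_connected_of_adj h, fun w hw ⟨z, hz⟩ => ?_⟩
  have hsub : ({u, v} \ {w} : Set V).Subsingleton := by
    rintro x ⟨hx, hxw⟩ y ⟨hy, hyw⟩
    simp only [Set.mem_insert_iff, Set.mem_singleton_iff] at hx hy hw hxw hyw
    grind
  have : Subsingleton ({u, v} \ {w} : Set V) := hsub.coe_sort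
  exact connected_induce_of_forall_exists hz fun x hx =>
    ⟨_, subset_rfl, hx, hz, Preconnected.of_subsingleton⟩

lemma isBiconnectedSet_sUnion {c : Set (Set V)} (hc : ∀ T ∈ c, IsBiconnectedSet G T)
    (hchain : IsChain (· ⊆ ·) c) (hne : c.Nonempty) : IsBiconnectedSet G (⋃₀ c) := by
  have hdir := hchain.directedOn
  obtain ⟨T₀, hT₀⟩ := hne
  obtain ⟨⟨z, hz⟩⟩ := (hc T₀ hT₀).1.nonempty
  refine ⟨connected_induce_of_forall_exists ⟨T₀, hT₀, hz⟩ fun u ⟨T₁, hT₁, hu⟩ => ?_, ?_⟩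
  · obtain ⟨T, hT, hT₀T, hT₁T⟩ := hdir T₀ hT₀ T₁ hT₁
    exact ⟨T, Set.subset_sUnion_of_mem hT, hT₁T hu, hT₀T hz, (hc T hT).1.preconnected⟩
  · rintro x ⟨Tx, hTx, hx⟩ ⟨y, ⟨Ty, hTy, hy⟩, hyx⟩
    refine connected_induce_of_forall_exists ⟨⟨Ty, hTy, hy⟩, hyx⟩
      fun u ⟨⟨Tu, hTu, hu⟩, hux⟩ => ?_
    obtain ⟨T', hT', hTxT', hTyT'⟩ := hdir Tx hTx Ty hTy
    obtain ⟨T, hT, hT'T, hTuT⟩ := hdir T' hT' Tu hTu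
    refine ⟨T \ {x}, Set.sdiff_subset_sdiff_left (Set.subset_sUnion_of_mem hT),
      ⟨hTuT hu, hux⟩, ⟨hT'T (hTyT' hy), hyx⟩, ?_⟩
    exact ((hc T hT).2 x (hT'T (hTxT' hx)) ⟨u, hTuT hu, hux⟩).preconnected

lemma exists_isBlock_superset {S : Set V} (hS : IsBiconnectedSet G S) :
    ∃ B, IsBlock G B ∧ S ⊆ B := by
  obtain ⟨B, hSB, hB⟩ := zorn_subset_nonempty {T | IsBiconnectedSet G T}
    (fun c hc hchain hne => ⟨⋃₀ c, isBiconnectedSet_sUnion hc hchain hne,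
      fun _ => Set.subset_sUnion_of_mem⟩) S hS
  exact ⟨B, ⟨hB.prop, fun B' hBB' hB' => (hB.eq_of_subset hB' hBB').symm⟩, hSB⟩

lemma _root_.SimpleGraph.Walk.IsPath.exists_walk_to_end_avoiding {a c u v : V}
    {P : G.Walk a c} (hP : P.IsPath) (hu : u ∈ P.support) (huv : u ≠ v) :
    ∃ e, (e = a ∨ e = c) ∧ ∃ w : G.Walk u e, ∀ x ∈ w.support, x ∈ P.support ∧ x ≠ v := by
  by_cases hv : v ∈ (P.dropUntil u hu).support
  · refine ⟨a, .inl rfl, (P.takeUntil u hu).reverse, fun x hx => ?_⟩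
    rw [Walk.support_reverse, List.mem_reverse] at hx
    exact ⟨P.support_takeUntil_subset_support hu hx,
      (P.take_spec hu ▸ hP).ne_of_mem_support_of_append huv.symm hx hv⟩
  · exact ⟨c, .inr rfl, P.dropUntil u hu, fun x hx =>
      ⟨P.support_dropUntil_subset_support hu hx, fun hxv => hv (hxv ▸ hx)⟩⟩

lemma IsBiconnectedSet.union_support {B : Set V} (hB : IsBiconnectedSet G B) {a c : V}
    (ha : a ∈ B) (hc : c ∈ B) (hac : a ≠ c) {P : G.Walk a c} (hP : P.IsPath) :
    IsBiconnectedSet G (B ∪ {x | x ∈ P.support}) := by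
  refine ⟨induce_union_connected hB.1.preconnected P.connected_induce_support.preconnected
    ⟨a, ha, P.start_mem_support⟩, fun v _ _ => ?_⟩
  obtain ⟨z, hzB, hzv⟩ : ∃ z ∈ B, z ≠ v := by
    by_cases hav : a = v
    · exact ⟨c, hc, hav ▸ hac.symm⟩
    · exact ⟨a, ha, hav⟩
  have hBv : (G.induce (B \ {v})).Preconnected := by
    by_cases hvB : v ∈ B
    · exact (hB.2 v hvB ⟨z, hzB, hzv⟩).preconnected
    · rw [Set.sdiff_singleton_eq_self hvB]
      exact hB.1.preconnected
  have hBvS : B \ {v} ⊆ (B ∪ {x | x ∈ P.support}) \ {v} :=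
    Set.sdiff_subset_sdiff_left Set.subset_union_left
  refine connected_induce_of_forall_exists (z := z) ⟨.inl hzB, hzv⟩ fun u ⟨hu, huv⟩ => ?_
  rcases hu with hu | hu
  · exact ⟨B \ {v}, hBvS, ⟨hu, huv⟩, ⟨hzB, hzv⟩, hBv⟩
  obtain ⟨e, he, w, hw⟩ := hP.exists_walk_to_end_avoiding hu huv
  have heB : e ∈ B \ {v} :=
    ⟨by rcases he with rfl | rfl <;> assumption, (hw e w.end_mem_support).2⟩
  refine ⟨{x | x ∈ w.support} ∪ B \ {v}, Set.union_subset ?_ hBvS, .inl w.start_mem_support,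
    .inr ⟨hzB, hzv⟩, (induce_union_connected w.connected_induce_support.preconnected hBv
      ⟨e, w.end_mem_support, heB⟩).preconnected⟩
  exact fun x hx => ⟨.inr (hw x hx).1, (hw x hx).2⟩

lemma IsBlock.support_subset_of_isPath {B : Set V} (hB : IsBlock G B) {a c : V} (ha : a ∈ B)
    (hc : c ∈ B) {P : G.Walk a c} (hP : P.IsPath) : ∀ x ∈ P.support, x ∈ B := by
  by_cases hac : a = c
  · subst hac
    rw [(Walk.isPath_iff_nil.1 hP).eq_nil]
    simpa using ha
  · have := hB.2 _ Set.subset_union_left (hB.1.union_support ha hc hac hP)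
    exact fun x hx => this ▸ Set.mem_union_right B hx

lemma IsBlock.dist_induce {B : Set V} (hB : IsBlock G B) (u v : B) :
    (G.induce B).dist u v = G.dist u v := by
  obtain ⟨W, hW⟩ := hB.1.1.exists_walk_length_eq_dist u v
  obtain ⟨p, hpP, hp⟩ : ∃ p : G.Walk u v, p.IsPath ∧ p.length = G.dist u v :=
    (W.map (Embedding.induce B).toHom).reachable.exists_path_of_dist
  refine le_antisymm ?_ ?_
  · calc (G.induce B).dist u v
        ≤ (p.induce B (hB.support_subset_of_isPath u.2 v.2 hpP)).length := dist_le _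
      _ = G.dist u v := by rw [length_induce, hp]
  · calc G.dist u v ≤ (W.map (Embedding.induce B).toHom).length := dist_le _
      _ = (G.induce B).dist u v := by rw [Walk.length_map, hW]

lemma _root_.SimpleGraph.Walk.exists_split_at_last_mem {S : Set V} :
    ∀ {u v : V} (p : G.Walk u v), (∃ x ∈ p.support, x ∈ S) →
      ∃ c ∈ S, ∃ (p₁ : G.Walk u c) (p₂ : G.Walk c v), p = p₁.append p₂ ∧
        ∀ x ∈ p₂.support, x ∈ S → x = c
  | _, _, .nil, ⟨x, hx, hxS⟩ => by
    rw [Walk.support_nil, List.mem_singleton] at hx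
    exact ⟨_, hx ▸ hxS, .nil, .nil, rfl, by simp⟩
  | u, _, .cons h p, ⟨x, hx, hxS⟩ => by
    by_cases hp : ∃ x ∈ p.support, x ∈ S
    · obtain ⟨c, hc, p₁, p₂, rfl, hlast⟩ := p.exists_split_at_last_mem hp
      exact ⟨c, hc, .cons h p₁, p₂, rfl, hlast⟩
    · push Not at hp
      have huS : u ∈ S := by
        rw [Walk.support_cons, List.mem_cons] at hx
        rcases hx with rfl | hx
        · exact hxS
        · exact absurd hxS (hp x hx)
      refine ⟨u, huS, .nil, .cons h p, rfl, fun y hy hyS => ?_⟩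
      rw [Walk.support_cons, List.mem_cons] at hy
      exact hy.resolve_right fun hy => hp y hy hyS

lemma length_eq_dist_of_append {u c v : V} {p : G.Walk u c} {q : G.Walk c v}
    (h : (p.append q).length = G.dist u v) : p.length = G.dist u c ∧ q.length = G.dist c v :=
  ⟨length_eq_dist_of_subwalk h ⟨.nil, q, by simp⟩, length_eq_dist_of_subwalk h ⟨p, .nil, by simp⟩⟩

lemma IsBlock.exists_exit {B : Set V} (hB : IsBlock G B) {s t : V} (hs : s ∈ B)
    {p : G.Walk s t} (hp : p.IsPath) :
    ∃ c ∈ B, ∃ (p₁ : G.Walk s c) (p₂ : G.Walk c t), p = p₁.append p₂ ∧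
      (∀ x ∈ p₁.support, x ∈ B) ∧ ∀ x ∈ p₂.support, x ∈ B → x = c := by
  obtain ⟨c, hc, p₁, p₂, rfl, hlast⟩ := p.exists_split_at_last_mem ⟨s, p.start_mem_support, hs⟩
  exact ⟨c, hc, p₁, p₂, rfl, hB.support_subset_of_isPath hs hc hp.of_append_left, hlast⟩

lemma IsBlock.eq_of_exits {B : Set V} (hB : IsBlock G B) {c c' t : V} (hc : c ∈ B)
    (hc' : c' ∈ B) {p : G.Walk c t} {q : G.Walk c' t} (hp : ∀ x ∈ p.support, x ∈ B → x = c)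
    (hq : ∀ x ∈ q.support, x ∈ B → x = c') : c = c' := by
  by_contra hne
  -- A `c`-`c'` path through `t` lies in `B`, yet its first edge lies on one of the two tails.
  obtain ⟨y, hcy, P, hP⟩ : ∃ y, ∃ (h : G.Adj c y) (P : G.Walk y c'),
      (p.append q.reverse).bypass = .cons h P := by
    cases (p.append q.reverse).bypass with
    | nil => exact absurd rfl hne
    | cons h P => exact ⟨_, h, P, rfl⟩
  have hyB : y ∈ B := hB.support_subset_of_isPath hc hc' (p.append q.reverse).bypass_isPath y
    (by rw [hP]; simp)
  have hedge : s(c, y) ∈ (p.append q.reverse).edges :=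
    Walk.edges_bypass_subset_edges _ (by rw [hP]; simp)
  rw [Walk.edges_append, Walk.edges_reverse, List.mem_append, List.mem_reverse] at hedge
  rcases hedge with hedge | hedge
  · exact hcy.ne (hp y (p.snd_mem_support_of_mem_edges hedge) hyB).symm
  · exact hne (hq c (q.fst_mem_support_of_mem_edges hedge) hc)

def DistCompatibleOn (G : SimpleGraph V) (φ : V → V → ℂ) (S : Set V) : Prop :=
  ∀ (s t : V) (p q : G.Walk s t), (∀ x ∈ p.support, x ∈ S) → (∀ x ∈ q.support, x ∈ S) →
    p.length = G.dist s t → q.length = G.dist s t → walkGain φ p = walkGain φ q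

variable {φ : V → V → ℂ}

lemma distCompatible_induce_iff {S : Set V}
    (hS : ∀ u v : S, (G.induce S).dist u v = G.dist u v) :
    DistCompatible (G.induce S) (fun i j : S => φ i j) ↔ DistCompatibleOn G φ S := by
  constructor
  · intro h s t p q hpS hqS hp hq
    rw [← walkGain_induce p hpS, ← walkGain_induce q hqS]
    exact h _ _ _ _ (by rw [length_induce, hp, hS]) (by rw [length_induce, hq, hS])
  · intro h s t P Q hP hQ
    have hsupp : ∀ {u v : S} (W : (G.induce S).Walk u v),
        ∀ x ∈ (W.map (Embedding.induce S).toHom).support, x ∈ S := fun W x hx => by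
      rw [Walk.support_map, List.mem_map] at hx
      obtain ⟨y, -, rfl⟩ := hx
      exact y.2
    have := h s t _ _ (hsupp P) (hsupp Q) ((Walk.length_map _ P).trans (hP.trans (hS s t)))
      ((Walk.length_map _ Q).trans (hQ.trans (hS s t)))
    exact (walkGain_map _ P).symm.trans (this.trans (walkGain_map _ Q))

theorem distCompatible_of_forall_isBlock (h : ∀ B, IsBlock G B → DistCompatibleOn G φ B) :
    DistCompatible G φ := by
  intro s t p q hp hq
  induction hd : G.dist s t using Nat.strong_induction_on generalizing s t with
  | _ n ih =>
  cases p with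
  | nil =>
    rw [(Walk.length_eq_zero_iff.1 (hq.trans (Walk.length_nil.symm.trans hp).symm)).eq_nil]
  | @cons _ v _ hsv p' =>
    obtain ⟨B, hB, hsvB⟩ := exists_isBlock_superset (isBiconnectedSet_pair hsv)
    have hpP := (Walk.cons hsv p').isPath_of_length_eq_dist hp
    obtain ⟨c, hc, p₁, p₂, rfl, hp₁, hp₂⟩ := hB.exists_exit (hsvB (by simp)) hpP.of_cons
    obtain ⟨c', hc', q₁, q₂, rfl, hq₁, hq₂⟩ :=
      hB.exists_exit (hsvB (by simp)) (q.isPath_of_length_eq_dist hq)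
    obtain rfl := hB.eq_of_exits hc hc' hp₂ hq₂
    rw [← Walk.cons_append] at hp ⊢
    obtain ⟨hp₁d, hp₂d⟩ := length_eq_dist_of_append hp
    obtain ⟨hq₁d, hq₂d⟩ := length_eq_dist_of_append hq
    have hlt : G.dist c t < n := by
      rw [← hd, ← hp, ← hp₂d, Walk.length_append, Walk.length_cons]
      omega
    rw [walkGain_append, walkGain_append,
      h B hB s c _ q₁ (by simpa [Walk.support_cons] using ⟨hsvB (by simp), hp₁⟩) hq₁ hp₁d hq₁d,
      ih _ hlt c t p₂ q₂ hp₂d hq₂d rfl]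

theorem distCompatible_iff_blocks_general {V : Type*} (G : SimpleGraph V)
    (φ : V → V → ℂ) :
    DistCompatible G φ ↔
      ∀ B : Set V, IsBlock G B →
        DistCompatible (G.induce B) (fun i j : B => φ i j) := by
  refine ⟨fun h B hB => ?_, fun h => distCompatible_of_forall_isBlock fun B hB => ?_⟩
  · exact (distCompatible_induce_iff hB.dist_induce).2 fun s t p q _ _ => h s t p q
  · exact (distCompatible_induce_iff hB.dist_induce).1 (h B hB)

/-- a gain graph on a connected graph is distance compatible iff each of its
blocks (with the restricted gain function) is distance compatible. -/
theorem distCompatible_iff_blocks {V : Type*} (G : SimpleGraph V) (hconn : G.Connected)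
    (φ : V → V → ℂ) (hφ : IsGain G φ) :
    DistCompatible G φ ↔
      ∀ B : Set V, IsBlock G B →
        DistCompatible (G.induce B) (fun i j : B => φ i j) :=
  distCompatible_iff_blocks_general G φ

end GG
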